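/- There exists a constant C > 0 such that for every h ∈ L^∞(S¹) with ∫_{S¹} h(v) dv = 0, the unique mean-zero solution g ∈ L²(S¹) of L g = h belongs to L^∞(S¹) and satisfies ‖g‖_{L^∞(S¹)} ≤ C ‖h‖_{L^∞(S¹)}. -/

import Mathlib

open MeasureTheory Real

noncomputable section

/-- The unit circle, modelled as `ℝ / 2πℤ`, carrying the arclength measure
(total mass `2π`). -/
abbrev S1 : Type := AddCircle (2 * π)

instance : Fact ((0:ℝ) < 2 * π) := ⟨by positivity⟩

/-- The gain operator of the two-dimensional hard-disk linear Boltzmann equation: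
`(K f)(v(θ)) = (1/2) ∫_{−1}^{1} f(v(θ + π − 2 arcsin δ)) dδ`. -/
def Kop (f : S1 → ℂ) (θ : S1) : ℂ :=
  (1 / 2 : ℂ) * ∫ δ in (-1:ℝ)..1, f (θ + ((π - 2 * arcsin δ : ℝ) : S1))

/-!
The gain operator is diagonal in the Fourier basis: `K eₙ = eₙ / (1 - 4n²)`. For a mean-zero `g`
the multiplier of `L = 2λ(K - I)` on the remaining modes has modulus at least `2λ`, so every
Fourier coefficient of `g` is bounded by `‖h‖₂ / (2λ)`, and the coefficients of `K g` by
`|1 - 4n²|⁻¹ ‖h‖₂ / (2λ)`. These are summable, so `K g` is a uniformly convergent Fourier series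
with sup norm `O(‖h‖₂) = O(‖h‖_∞)`; hence `g = K g - h / (2λ)` is essentially bounded by
`O(‖h‖_∞)` as well.
-/

def gainMultiplier (n : ℤ) : ℝ := (1 - 4 * (n : ℝ) ^ 2)⁻¹

lemma one_sub_four_mul_sq_le {n : ℤ} (hn : n ≠ 0) : 1 - 4 * (n : ℝ) ^ 2 ≤ -3 * (n : ℝ) ^ 2 := by
  have : (1 : ℝ) ≤ (n : ℝ) ^ 2 := mod_cast (one_le_sq_iff_one_le_abs _).mpr (Int.one_le_abs hn)
  linarith

lemma gainMultiplier_nonpos {n : ℤ} (hn : n ≠ 0) : gainMultiplier n ≤ 0 := by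
  have := one_sub_four_mul_sq_le hn
  exact inv_nonpos.mpr (by nlinarith [sq_nonneg (n : ℝ)])

lemma one_le_abs_gainMultiplier_sub_one {n : ℤ} (hn : n ≠ 0) : 1 ≤ |gainMultiplier n - 1| := by
  have := gainMultiplier_nonpos hn
  rw [abs_of_nonpos (by linarith)]
  linarith

lemma abs_gainMultiplier_le {n : ℤ} (hn : n ≠ 0) : |gainMultiplier n| ≤ ((n : ℝ) ^ 2)⁻¹ := by
  have hsq : (0 : ℝ) < (n : ℝ) ^ 2 := by positivity
  have := one_sub_four_mul_sq_le hn
  rw [abs_of_nonpos (gainMultiplier_nonpos hn), gainMultiplier, ← inv_neg]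
  exact inv_anti₀ hsq (by linarith)

lemma summable_abs_gainMultiplier : Summable fun n : ℤ => |gainMultiplier n| := by
  refine Summable.of_norm_bounded_eventually (g := fun n : ℤ => ((n : ℝ) ^ 2)⁻¹) ?_ ?_
  · simpa using summable_one_div_int_pow.mpr one_lt_two
  · filter_upwards [Filter.eventually_cofinite_ne 0] with n hn
    simpa using abs_gainMultiplier_le hn

lemma one_sub_four_mul_sq_ne_zero (n : ℤ) : (1 : ℂ) - 4 * (n : ℂ) ^ 2 ≠ 0 := by
  intro h
  have : (1 : ℤ) - 4 * n ^ 2 = 0 := by exact_mod_cast h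
  omega

lemma gainMultiplier_mul (n : ℤ) : (gainMultiplier n : ℂ) * (1 - 4 * (n : ℂ) ^ 2) = 1 := by
  rw [gainMultiplier]
  push_cast
  exact inv_mul_cancel₀ (one_sub_four_mul_sq_ne_zero n)

lemma hasDerivAt_fourier_reflection (n : ℤ) (t : ℝ) :
    HasDerivAt (fun s : ℝ => fourier n ((π - 2 * s : ℝ) : S1))
      (-2 * n * Complex.I * fourier n ((π - 2 * t : ℝ) : S1)) t := by
  have h := (hasDerivAt_fourier (2 * π) n (π - 2 * t)).scomp t
    (((hasDerivAt_id t).const_mul 2).const_sub π)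
  refine h.congr_deriv ?_
  rw [Complex.real_smul]
  push_cast
  field_simp

lemma hasDerivAt_reflection_primitive (n : ℤ) (t : ℝ) :
    HasDerivAt (fun s : ℝ => gainMultiplier n * (fourier n ((π - 2 * s : ℝ) : S1) *
        (Real.sin s - 2 * n * Complex.I * Real.cos s)))
      (Real.cos t • fourier n ((π - 2 * t : ℝ) : S1)) t := by
  have h := ((hasDerivAt_fourier_reflection n t).mul
    ((hasDerivAt_sin t).ofReal_comp.sub
      (((hasDerivAt_cos t).ofReal_comp).const_mul (2 * n * Complex.I)))).const_mul
    (gainMultiplier n : ℂ)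
  refine h.congr_deriv ?_
  simp only [Pi.sub_apply, Complex.ofReal_neg, Complex.real_smul]
  linear_combination (Complex.ofReal (Real.cos t) * fourier n ((π - 2 * t : ℝ) : S1)) *
      gainMultiplier_mul n +
    4 * gainMultiplier n * n ^ 2 * fourier n ((π - 2 * t : ℝ) : S1) * Real.cos t * Complex.I_sq

-- The substitution `δ = sin t` turns the integrand into `cos t • fourier n (π - 2t)`.
lemma integral_fourier_reflection (n : ℤ) :
    ∫ δ in (-1 : ℝ)..1, fourier n ((π - 2 * arcsin δ : ℝ) : S1) = 2 * gainMultiplier n := by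
  have hsubst := intervalIntegral.integral_deriv_smul_comp (a := -(π / 2)) (b := π / 2)
    (g := fun δ => fourier n ((π - 2 * arcsin δ : ℝ) : S1))
    (fun t _ => hasDerivAt_sin t) continuous_cos.continuousOn (by fun_prop)
  simp only [Real.sin_neg, Real.sin_pi_div_two, Function.comp_def] at hsubst
  have hle : -(π / 2) ≤ π / 2 := by linarith [pi_pos]
  have hright : π - 2 * (π / 2) = 0 := by ring
  have hleft : π - 2 * -(π / 2) = 2 * π := by ring
  rw [← hsubst]
  calc _ = ∫ t in -(π / 2)..π / 2, Real.cos t • fourier n ((π - 2 * t : ℝ) : S1) := by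
        refine intervalIntegral.integral_congr fun t ht => ?_
        rw [Set.uIcc_of_le hle] at ht
        simp only [arcsin_sin ht.1 ht.2]
    _ = 2 * gainMultiplier n := by
        rw [intervalIntegral.integral_eq_sub_of_hasDerivAt
          (fun t _ => hasDerivAt_reflection_primitive n t)
          (by apply Continuous.intervalIntegrable; fun_prop)]
        simp only [hright, hleft, AddCircle.coe_period, QuotientAddGroup.mk_zero,
          fourier_eval_zero, Real.sin_neg, Real.cos_neg, sin_pi_div_two, cos_pi_div_two]
        push_cast
        ring

lemma fourier_apply_add {T : ℝ} (n : ℤ) (x y : AddCircle T) :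
    fourier n (x + y) = fourier n x * fourier n y := by
  simp only [fourier_apply, smul_add, AddCircle.toCircle_add, Circle.coe_mul]

lemma Kop_fourier (n : ℤ) (θ : S1) : Kop (fourier n) θ = gainMultiplier n * fourier n θ := by
  simp only [Kop, fourier_apply_add, intervalIntegral.integral_const_mul,
    integral_fourier_reflection]
  ring

theorem ae_ae_eq_comp_add_of_ae_eq {G β : Type*} [MeasurableSpace G] [AddCommGroup G]
    [MeasurableAdd₂ G] {μ : Measure G} [SFinite μ] [μ.IsAddLeftInvariant] (ν : Measure G)
    [SFinite ν] {f g : G → β} (hfg : f =ᵐ[μ] g) :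
    ∀ᵐ θ ∂μ, ∀ᵐ s ∂ν, f (θ + s) = g (θ + s) := by
  have h := (quasiMeasurePreserving_add_swap μ ν).ae_eq hfg
  simpa [add_comm] using Measure.ae_ae_of_ae_prod h

lemma Kop_congr_ae {f g : S1 → ℂ} (hfg : f =ᵐ[volume] g) : Kop f =ᵐ[volume] Kop g := by
  let ρ : Measure ℝ := volume.restrict (Set.Ioc (-1) 1)
  have hu : Measurable fun δ : ℝ => ((π - 2 * arcsin δ : ℝ) : S1) := by fun_prop
  filter_upwards [ae_ae_eq_comp_add_of_ae_eq (ρ.map _) hfg] with θ hθ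
  have hδ := ae_of_ae_map hu.aemeasurable hθ
  rw [Kop, Kop, intervalIntegral.integral_of_le (by norm_num),
    intervalIntegral.integral_of_le (by norm_num), integral_congr_ae hδ]

section FourierL2

variable {T : ℝ} [hT : Fact (0 < T)]

abbrev fourierL2 (n : ℤ) : Lp ℂ 2 (volume : Measure (AddCircle T)) :=
  ContinuousMap.toLp 2 volume ℂ (fourier n)

lemma inner_fourierL2 (i j : ℤ) :
    inner ℂ (fourierL2 (T := T) i) (fourierL2 j) = if i = j then (T : ℂ) else 0 := by
  have h := orthonormal_iff_ite.mp (orthonormal_fourier (T := T)) i j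
  rw [ContinuousMap.inner_toLp] at h ⊢
  rw [AddCircle.volume_eq_smul_haarAddCircle, integral_smul_measure, h,
    ENNReal.toReal_ofReal hT.out.le]
  split_ifs <;> simp

-- Mathlib's `fourierBasis` lives on the Haar probability measure; for `volume`, which has total
-- mass `T`, the monomials have to be rescaled by `T^(-1/2)`.
lemma orthonormal_fourierL2 :
    Orthonormal ℂ fun n => (((√T)⁻¹ : ℝ) : ℂ) • fourierL2 (T := T) n := by
  rw [orthonormal_iff_ite]
  intro i j
  simp only [inner_smul_left, inner_smul_right, inner_fourierL2, Complex.conj_ofReal]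
  split_ifs
  · rw [← mul_assoc, ← Complex.ofReal_mul, ← Complex.ofReal_mul, ← mul_inv,
      Real.mul_self_sqrt hT.out.le, inv_mul_cancel₀ hT.out.ne', Complex.ofReal_one]
  · simp

lemma span_fourierL2_closure_eq_top :
    (Submodule.span ℂ (Set.range (fourierL2 (T := T)))).topologicalClosure = ⊤ := by
  convert! (ContinuousMap.toLp_denseRange ℂ (volume : Measure (AddCircle T)) ℂ
    (by norm_num : (2 : ENNReal) ≠ ⊤)).topologicalClosure_map_submodule span_fourier_closure_eq_top
  rw [Submodule.map_span, ← Set.range_comp']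
  rfl

def fourierBasisVolume : HilbertBasis ℤ ℂ (Lp ℂ 2 (volume : Measure (AddCircle T))) :=
  HilbertBasis.mk orthonormal_fourierL2 <| by
    rw [Set.range_smul, Submodule.span_smul_eq_of_isUnit, span_fourierL2_closure_eq_top]
    simpa using (Real.sqrt_pos.mpr hT.out).ne'

lemma coe_fourierBasisVolume :
    ⇑(fourierBasisVolume (T := T)) = fun n => (((√T)⁻¹ : ℝ) : ℂ) • fourierL2 (T := T) n :=
  HilbertBasis.coe_mk _ _

lemma fourierBasisVolume_repr_zero (g : Lp ℂ 2 (volume : Measure (AddCircle T))) :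
    fourierBasisVolume.repr g 0 = ((√T)⁻¹ : ℝ) * ∫ θ, g θ := by
  rw [HilbertBasis.repr_apply_apply, coe_fourierBasisVolume, inner_smul_left, Complex.conj_ofReal,
    L2.inner_def]
  congr 1
  refine integral_congr_ae ?_
  filter_upwards [ContinuousMap.coeFn_toLp (p := 2) (𝕜 := ℂ) volume (fourier (T := T) 0)]
    with θ hθ
  rw [hθ]
  simp

theorem ae_norm_le_tsum_of_hasSum_fourier {p : ENNReal} [Fact (1 ≤ p)]
    {μ : Measure (AddCircle T)} [IsFiniteMeasure μ] {a : ℤ → ℂ} (ha : Summable fun n => ‖a n‖)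
    {x : Lp ℂ p μ} (hx : HasSum (fun n => a n • ContinuousMap.toLp p μ ℂ (fourier n)) x) :
    ∀ᵐ θ ∂μ, ‖x θ‖ ≤ ∑' n, ‖a n‖ := by
  have hsum : Summable fun n => ‖a n • fourier (T := T) n‖ := by
    simpa [norm_smul, fourier_norm] using ha
  have hx' : x = ContinuousMap.toLp p μ ℂ (∑' n, a n • fourier n) := by
    refine hx.unique ?_
    simpa using (hsum.of_norm.hasSum).mapL (ContinuousMap.toLp p μ ℂ)
  filter_upwards [ContinuousMap.coeFn_toLp (p := p) (𝕜 := ℂ) μ (∑' n, a n • fourier n)] with θ hθ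
  rw [hx', hθ]
  refine (ContinuousMap.norm_coe_le_norm _ θ).trans ((norm_tsum_le_tsum_norm hsum).trans ?_)
  simp [norm_smul, fourier_norm]

end FourierL2

theorem HilbertBasis.repr_apply_of_apply_eq_smul {ι 𝕜 E : Type*} [RCLike 𝕜]
    [NormedAddCommGroup E] [InnerProductSpace 𝕜 E] (b : HilbertBasis ι 𝕜 E) {A : E →L[𝕜] E}
    {k : ι → 𝕜} (hA : ∀ i, A (b i) = k i • b i) (x : E) (i : ι) :
    b.repr (A x) i = k i * b.repr x i := by
  classical
  have h := (b.hasSum_repr x).mapL (innerSL 𝕜 (b i) ∘L A)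
  rw [b.repr_apply_apply]
  refine h.unique ?_
  convert hasSum_ite_eq i (k i * b.repr x i) using 1
  ext j
  simp only [ContinuousLinearMap.comp_apply, map_smul, hA, innerSL_apply_apply,
    orthonormal_iff_ite.mp b.orthonormal]
  rcases eq_or_ne i j with rfl | hij
  · simp [mul_comm]
  · simp [hij, hij.symm]

theorem MeasureTheory.Lp.norm_le_sqrt_measureReal_univ_mul {α E : Type*} [MeasurableSpace α]
    [NormedAddCommGroup E] {μ : Measure α} [IsFiniteMeasure μ] (f : Lp E 2 μ)
    (hf : eLpNorm f ⊤ μ ≠ ⊤) : ‖f‖ ≤ √(μ.real Set.univ) * (eLpNorm f ⊤ μ).toReal := by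
  have h := eLpNorm_le_eLpNorm_mul_rpow_measure_univ (p := 2) (q := ⊤) le_top
    (Lp.aestronglyMeasurable f)
  norm_num [← eLpNorm_exponent_top] at h
  rw [Lp.norm_def, Real.sqrt_eq_rpow, measureReal_def, ENNReal.toReal_rpow, mul_comm,
    ← ENNReal.toReal_mul]
  exact ENNReal.toReal_mono (by finiteness) h

theorem MeasureTheory.ae_norm_le_toReal_eLpNorm_top {α E : Type*} [MeasurableSpace α]
    [NormedAddCommGroup E] {μ : Measure α} {f : α → E} (hf : eLpNorm f ⊤ μ ≠ ⊤) :
    ∀ᵐ x ∂μ, ‖f x‖ ≤ (eLpNorm f ⊤ μ).toReal := by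
  filter_upwards [ae_le_eLpNormEssSup (f := f) (μ := μ)] with x hx
  rw [← eLpNorm_exponent_top] at hx
  simpa only [toReal_enorm] using ENNReal.toReal_mono hf hx

section GainOperator

variable {K : Lp ℂ 2 (volume : Measure S1) →L[ℂ] Lp ℂ 2 (volume : Measure S1)} {lam : ℝ}
  {g h : Lp ℂ 2 (volume : Measure S1)}

lemma apply_fourierL2
    (hK : ∀ f : Lp ℂ 2 (volume : Measure S1), (K f : S1 → ℂ) =ᵐ[volume] Kop f) (n : ℤ) :
    K (fourierL2 n) = (gainMultiplier n : ℂ) • fourierL2 n := by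
  refine Lp.ext ?_
  have hf := ContinuousMap.coeFn_toLp (p := 2) (𝕜 := ℂ) (volume : Measure S1) (fourier n)
  filter_upwards [hK (fourierL2 n), Kop_congr_ae hf, hf,
    Lp.coeFn_smul (gainMultiplier n : ℂ) (fourierL2 n)] with θ hKθ hKopθ hfθ hsθ
  rw [hKθ, hKopθ, hsθ, Pi.smul_apply, hfθ, Kop_fourier, smul_eq_mul]

lemma apply_fourierBasisVolume
    (hK : ∀ f : Lp ℂ 2 (volume : Measure S1), (K f : S1 → ℂ) =ᵐ[volume] Kop f) (n : ℤ) :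
    K (fourierBasisVolume n) = (gainMultiplier n : ℂ) • fourierBasisVolume n := by
  rw [coe_fourierBasisVolume, map_smul, apply_fourierL2 hK, smul_comm]

lemma norm_repr_le_of_collision_eq (hlam : 0 < lam)
    (hK : ∀ f : Lp ℂ 2 (volume : Measure S1), (K f : S1 → ℂ) =ᵐ[volume] Kop f)
    (hg : ∫ θ, g θ = 0)
    (hgh : (((2 * lam : ℝ) : ℂ) •
      (K - ContinuousLinearMap.id ℂ (Lp ℂ 2 (volume : Measure S1)))) g = h) (n : ℤ) :
    ‖fourierBasisVolume.repr g n‖ ≤ ‖h‖ / (2 * lam) := by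
  rcases eq_or_ne n 0 with rfl | hn
  · rw [fourierBasisVolume_repr_zero, hg, mul_zero, norm_zero]
    positivity
  have hrepr : fourierBasisVolume.repr h n
      = ((2 * lam : ℝ) : ℂ) * ((gainMultiplier n : ℂ) - 1) * fourierBasisVolume.repr g n := by
    rw [← hgh]
    refine fourierBasisVolume.repr_apply_of_apply_eq_smul
      (k := fun i => ((2 * lam : ℝ) : ℂ) * ((gainMultiplier i : ℂ) - 1)) (fun i => ?_) g n
    simp only [smul_apply, sub_apply, ContinuousLinearMap.id_apply, apply_fourierBasisVolume hK]
    rw [mul_smul, sub_smul, one_smul]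
  have hmult : 2 * lam ≤ ‖((2 * lam : ℝ) : ℂ) * ((gainMultiplier n : ℂ) - 1)‖ := by
    rw [norm_mul, ← Complex.ofReal_one, ← Complex.ofReal_sub, Complex.norm_real,
      Complex.norm_real, Real.norm_of_nonneg (by positivity), Real.norm_eq_abs]
    exact le_mul_of_one_le_right (by positivity) (one_le_abs_gainMultiplier_sub_one hn)
  rw [le_div_iff₀ (by positivity)]
  calc ‖fourierBasisVolume.repr g n‖ * (2 * lam)
      ≤ ‖fourierBasisVolume.repr h n‖ := by
        rw [hrepr, norm_mul, mul_comm]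
        gcongr
    _ ≤ ‖fourierBasisVolume.repr h‖ := lp.norm_apply_le_norm two_ne_zero _ n
    _ = ‖h‖ := fourierBasisVolume.repr.norm_map h

lemma ae_norm_apply_le
    (hK : ∀ f : Lp ℂ 2 (volume : Measure S1), (K f : S1 → ℂ) =ᵐ[volume] Kop f)
    {M : ℝ} (hM : ∀ n, ‖fourierBasisVolume.repr g n‖ ≤ M) :
    ∀ᵐ θ ∂volume, ‖K g θ‖ ≤ (∑' n, |gainMultiplier n|) * M / √(2 * π) := by
  set a : ℤ → ℂ := fun n => fourierBasisVolume.repr (K g) n * ((√(2 * π))⁻¹ : ℝ)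
  have hsum : HasSum (fun n => a n • fourierL2 n) (K g) := by
    simpa [a, coe_fourierBasisVolume, smul_smul] using fourierBasisVolume.hasSum_repr (K g)
  have ha : ∀ n, ‖a n‖ ≤ |gainMultiplier n| * M / √(2 * π) := by
    intro n
    simp only [a, fourierBasisVolume.repr_apply_of_apply_eq_smul (apply_fourierBasisVolume hK),
      norm_mul, Complex.norm_real, Real.norm_eq_abs, abs_inv, abs_of_nonneg (Real.sqrt_nonneg _),
      ← div_eq_mul_inv]
    gcongr
    exact hM n
  have hbound : Summable fun n => |gainMultiplier n| * M / √(2 * π) :=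
    (summable_abs_gainMultiplier.mul_right M).div_const _
  have ha_summable := hbound.of_nonneg_of_le (fun _ => norm_nonneg _) ha
  filter_upwards [ae_norm_le_tsum_of_hasSum_fourier ha_summable hsum] with θ hθ
  calc ‖K g θ‖ ≤ ∑' n, ‖a n‖ := hθ
    _ ≤ ∑' n, |gainMultiplier n| * M / √(2 * π) := ha_summable.tsum_le_tsum ha hbound
    _ = (∑' n, |gainMultiplier n|) * M / √(2 * π) := by rw [tsum_div_const, tsum_mul_right]

lemma ae_norm_apply_le_of_collision_eq (hlam : 0 < lam)
    (hK : ∀ f : Lp ℂ 2 (volume : Measure S1), (K f : S1 → ℂ) =ᵐ[volume] Kop f)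
    (hh : eLpNorm h ⊤ volume ≠ ⊤) (hg : ∫ θ, g θ = 0)
    (hgh : (((2 * lam : ℝ) : ℂ) •
      (K - ContinuousLinearMap.id ℂ (Lp ℂ 2 (volume : Measure S1)))) g = h) :
    ∀ᵐ θ ∂volume, ‖K g θ‖ ≤
      (∑' n, |gainMultiplier n|) / (2 * lam) * (eLpNorm h ⊤ volume).toReal := by
  have hvol : (volume : Measure S1).real Set.univ = 2 * π := by simp [Measure.real, pi_pos.le]
  have hL2 := Lp.norm_le_sqrt_measureReal_univ_mul h hh
  rw [hvol] at hL2
  filter_upwards [ae_norm_apply_le hK (norm_repr_le_of_collision_eq hlam hK hg hgh)] with θ hθ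
  refine hθ.trans ?_
  rw [div_le_iff₀ (by positivity)]
  calc (∑' n, |gainMultiplier n|) * (‖h‖ / (2 * lam))
      ≤ (∑' n, |gainMultiplier n|) * (√(2 * π) * (eLpNorm h ⊤ volume).toReal / (2 * lam)) := by
        gcongr
    _ = _ := by ring

lemma ae_norm_le_of_collision_eq (hlam : 0 < lam)
    (hK : ∀ f : Lp ℂ 2 (volume : Measure S1), (K f : S1 → ℂ) =ᵐ[volume] Kop f)
    (hh : eLpNorm h ⊤ volume ≠ ⊤) (hg : ∫ θ, g θ = 0)
    (hgh : (((2 * lam : ℝ) : ℂ) •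
      (K - ContinuousLinearMap.id ℂ (Lp ℂ 2 (volume : Measure S1)))) g = h) :
    ∀ᵐ θ ∂volume, ‖g θ‖ ≤
      (∑' n, |gainMultiplier n| + 1) / (2 * lam) * (eLpNorm h ⊤ volume).toReal := by
  set c : ℂ := ((2 * lam : ℝ) : ℂ)
  set A := ∑' n, |gainMultiplier n|
  set H := (eLpNorm h ⊤ volume).toReal
  have hc : ‖c⁻¹‖ = (2 * lam)⁻¹ := by
    rw [norm_inv, Complex.norm_real, Real.norm_of_nonneg (by positivity)]
  have hsolve : g = K g - c⁻¹ • h := by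
    have hc0 : c ≠ 0 := by simp [c, hlam.ne']
    rw [← hgh, smul_apply, smul_smul, inv_mul_cancel₀ hc0, one_smul, sub_apply,
      ContinuousLinearMap.id_apply, sub_sub_cancel]
  filter_upwards [ae_norm_apply_le_of_collision_eq hlam hK hh hg hgh,
    ae_norm_le_toReal_eLpNorm_top hh, Lp.coeFn_sub (K g) (c⁻¹ • h), Lp.coeFn_smul c⁻¹ h]
    with θ hKθ hhθ hsub hsmul
  rw [hsolve, hsub, Pi.sub_apply, hsmul, Pi.smul_apply, smul_eq_mul]
  calc ‖K g θ - c⁻¹ * h θ‖ ≤ ‖K g θ‖ + ‖c⁻¹‖ * ‖h θ‖ := by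
        rw [← norm_mul]
        exact norm_sub_le _ _
    _ ≤ A / (2 * lam) * H + (2 * lam)⁻¹ * H := by
        rw [hc]
        gcongr
    _ = (A + 1) / (2 * lam) * H := by ring

end GainOperator

/-- there is a constant `C > 0` such that for every essentially
bounded mean-zero `h ∈ L^∞(S¹)`, the unique mean-zero solution `g ∈ L²(S¹)` of
`L g = h` (where `L = 2λ(K − I)`) is essentially bounded with
`‖g‖_{L^∞} ≤ C ‖h‖_{L^∞}`. -/
theorem Linv_bounded_Linfty
    (lam : ℝ) (hlam : 0 < lam)
    (T : Lp ℂ 2 (volume : Measure S1) →L[ℂ] Lp ℂ 2 (volume : Measure S1))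
    (hT : ∀ f : Lp ℂ 2 (volume : Measure S1), (T f : S1 → ℂ) =ᵐ[volume] Kop f) :
    ∃ C : ℝ, 0 < C ∧
      ∀ h g : Lp ℂ 2 (volume : Measure S1),
        MemLp (h : S1 → ℂ) ⊤ (volume : Measure S1) →
        (∫ v, h v ∂(volume : Measure S1)) = 0 →
        (∫ v, g v ∂(volume : Measure S1)) = 0 →
        (((2 * lam : ℝ) : ℂ) •
          (T - ContinuousLinearMap.id ℂ (Lp ℂ 2 (volume : Measure S1)))) g = h →
        MemLp (g : S1 → ℂ) ⊤ (volume : Measure S1) ∧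
        eLpNorm (g : S1 → ℂ) ⊤ (volume : Measure S1)
          ≤ ENNReal.ofReal C * eLpNorm (h : S1 → ℂ) ⊤ (volume : Measure S1) := by
  set C := (∑' n, |gainMultiplier n| + 1) / (2 * lam)
  have hC : 0 < C := by positivity
  refine ⟨C, hC, fun h g hh _ hg hgh => ?_⟩
  have hbound := ae_norm_le_of_collision_eq hlam hT hh.eLpNorm_ne_top hg hgh
  refine ⟨memLp_top_of_bound (Lp.aestronglyMeasurable g) _ hbound, ?_⟩
  calc eLpNorm g ⊤ volume ≤ ENNReal.ofReal (C * (eLpNorm h ⊤ volume).toReal) := by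
        rw [eLpNorm_exponent_top]
        exact eLpNormEssSup_le_of_ae_bound hbound
    _ = ENNReal.ofReal C * eLpNorm h ⊤ volume := by
        rw [ENNReal.ofReal_mul hC.le, ENNReal.ofReal_toReal hh.eLpNorm_ne_top]
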